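/- Any transportation plan of a sequentially composed OT yields a coupling with cost at least the tropical composition cost: if P^A ∈ ℝ_{≥0}^(m×l), P^B ∈ ℝ_{≥0}^(l×n) are feasible for the sequentially composed OT with marginals a, b, then ⟨C^A, P^A⟩ + ⟨C^B, P^B⟩ ≥ min over couplings P of a, b of ⟨C^A ⨟ C^B, P⟩. -/

import Mathlib

open BigOperators

noncomputable def seqR {m l n : ℕ} (X : Matrix (Fin m) (Fin l) ℝ)
    (Y : Matrix (Fin l) (Fin n) ℝ) : Matrix (Fin m) (Fin n) ℝ :=
  fun i j => ⨅ k : Fin l, (X i k + Y k j)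

def dotM {m n : ℕ} (X Y : Matrix (Fin m) (Fin n) ℝ) : ℝ := ∑ i, ∑ j, X i j * Y i j

/-!
Glue the two plans through the middle marginal `μ k = ∑ i, PA i k`: sending the mass
`PA i k * PB k j / μ k` from `i` to `j` gives a coupling of `a` and `b`, and routing it
through `k` costs `CA i k + CB k j ≥ (CA ⨟ CB) i j`. Summing over `j` (resp. `i`) recovers
`PA` (resp. `PB`), so the glued plan costs at most `⟨CA, PA⟩ + ⟨CB, PB⟩`.
-/

open Finset

section Glue

variable {ι κ ν : Type*} (PA : Matrix ι κ ℝ) (PB : Matrix κ ν ℝ)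

/-- Mass sent from `i` through `k` to `j`; it vanishes when the middle marginal at `k` does,
since `x / 0 = 0`. -/
noncomputable def glueTerm [Fintype ι] (i : ι) (k : κ) (j : ν) : ℝ :=
  PA i k * PB k j / ∑ i', PA i' k

noncomputable def glue [Fintype ι] [Fintype κ] : Matrix ι ν ℝ :=
  fun i j => ∑ k, glueTerm PA PB i k j

variable {PA PB}

theorem glueTerm_nonneg [Fintype ι] (hPA : ∀ i k, 0 ≤ PA i k) (hPB : ∀ k j, 0 ≤ PB k j)
    (i : ι) (k : κ) (j : ν) : 0 ≤ glueTerm PA PB i k j :=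
  div_nonneg (mul_nonneg (hPA i k) (hPB k j)) (sum_nonneg fun i' _ => hPA i' k)

theorem sum_glueTerm_right [Fintype ι] [Fintype ν] (hPA : ∀ i k, 0 ≤ PA i k)
    (hglue : ∀ k, ∑ i, PA i k = ∑ j, PB k j) (i : ι) (k : κ) :
    ∑ j, glueTerm PA PB i k j = PA i k := by
  simp only [glueTerm, ← sum_div, ← mul_sum, ← hglue k]
  exact mul_div_cancel_of_imp fun h =>
    (sum_eq_zero_iff_of_nonneg fun i' _ => hPA i' k).1 h i (mem_univ i)

theorem sum_glueTerm_left [Fintype ι] [Fintype ν] (hPB : ∀ k j, 0 ≤ PB k j)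
    (hglue : ∀ k, ∑ i, PA i k = ∑ j, PB k j) (k : κ) (j : ν) :
    ∑ i, glueTerm PA PB i k j = PB k j := by
  simp only [glueTerm, ← sum_div, ← sum_mul]
  refine mul_div_cancel_left_of_imp fun h => ?_
  rw [hglue k] at h
  exact (sum_eq_zero_iff_of_nonneg fun j' _ => hPB k j').1 h j (mem_univ j)

theorem glue_nonneg [Fintype ι] [Fintype κ] (hPA : ∀ i k, 0 ≤ PA i k)
    (hPB : ∀ k j, 0 ≤ PB k j) (i : ι) (j : ν) : 0 ≤ glue PA PB i j :=
  sum_nonneg fun k _ => glueTerm_nonneg hPA hPB i k j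

theorem sum_glue_row [Fintype ι] [Fintype κ] [Fintype ν] (hPA : ∀ i k, 0 ≤ PA i k)
    (hglue : ∀ k, ∑ i, PA i k = ∑ j, PB k j) (i : ι) :
    ∑ j, glue PA PB i j = ∑ k, PA i k := by
  simp only [glue]
  rw [sum_comm]
  exact sum_congr rfl fun k _ => sum_glueTerm_right hPA hglue i k

theorem sum_glue_col [Fintype ι] [Fintype κ] [Fintype ν] (hPB : ∀ k j, 0 ≤ PB k j)
    (hglue : ∀ k, ∑ i, PA i k = ∑ j, PB k j) (j : ν) :
    ∑ i, glue PA PB i j = ∑ k, PB k j := by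
  simp only [glue]
  rw [sum_comm]
  exact sum_congr rfl fun k _ => sum_glueTerm_left hPB hglue k j

end Glue

theorem seqR_le {m l n : ℕ} (X : Matrix (Fin m) (Fin l) ℝ) (Y : Matrix (Fin l) (Fin n) ℝ)
    (i : Fin m) (k : Fin l) (j : Fin n) : seqR X Y i j ≤ X i k + Y k j :=
  ciInf_le (Set.finite_range _).bddBelow k

theorem dotM_seqR_glue_le {m l n : ℕ}
    (CA : Matrix (Fin m) (Fin l) ℝ) (CB : Matrix (Fin l) (Fin n) ℝ)
    {PA : Matrix (Fin m) (Fin l) ℝ} {PB : Matrix (Fin l) (Fin n) ℝ}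
    (hPA : ∀ i k, 0 ≤ PA i k) (hPB : ∀ k j, 0 ≤ PB k j)
    (hglue : ∀ k, ∑ i, PA i k = ∑ j, PB k j) :
    dotM (seqR CA CB) (glue PA PB) ≤ dotM CA PA + dotM CB PB := by
  calc dotM (seqR CA CB) (glue PA PB)
      = ∑ i, ∑ j, ∑ k, seqR CA CB i j * glueTerm PA PB i k j := by
        simp only [dotM, glue, mul_sum]
    _ ≤ ∑ i, ∑ j, ∑ k, (CA i k + CB k j) * glueTerm PA PB i k j := by
        gcongr with i _ j _ k _
        · exact glueTerm_nonneg hPA hPB i k j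
        · exact seqR_le CA CB i k j
    _ = ∑ i, ∑ k, CA i k * ∑ j, glueTerm PA PB i k j
          + ∑ k, ∑ j, CB k j * ∑ i, glueTerm PA PB i k j := by
        simp only [add_mul, sum_add_distrib, mul_sum]
        congr 1
        · exact sum_congr rfl fun i _ => sum_comm
        · rw [sum_comm]
          exact (sum_congr rfl fun j _ => sum_comm).trans sum_comm
    _ = dotM CA PA + dotM CB PB := by
        simp only [sum_glueTerm_right hPA hglue, sum_glueTerm_left hPB hglue, dotM]

theorem neg_sum_abs_mul_le_dotM {m n : ℕ} (C P : Matrix (Fin m) (Fin n) ℝ) {a : Fin m → ℝ}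
    (hP : ∀ i j, 0 ≤ P i j) (hPa : ∀ i, ∑ j, P i j = a i) :
    -∑ i, ∑ j, |C i j| * a i ≤ dotM C P := by
  rw [← sum_neg_distrib]
  refine sum_le_sum fun i _ => ?_
  rw [← sum_neg_distrib]
  refine sum_le_sum fun j _ => ?_
  have hPij : P i j ≤ a i := hPa i ▸ single_le_sum (fun j' _ => hP i j') (mem_univ j)
  calc -(|C i j| * a i) ≤ -(|C i j| * P i j) := by gcongr
    _ ≤ C i j * P i j := by
        rw [← neg_mul]
        exact mul_le_mul_of_nonneg_right (neg_abs_le _) (hP i j)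

theorem seq_plan_cost_ge_monolithic_general {m l n : ℕ}
    (CA : Matrix (Fin m) (Fin l) ℝ) (CB : Matrix (Fin l) (Fin n) ℝ)
    (a : Fin m → ℝ) (b : Fin n → ℝ)
    (PA : Matrix (Fin m) (Fin l) ℝ) (PB : Matrix (Fin l) (Fin n) ℝ)
    (hPA : ∀ i k, 0 ≤ PA i k) (hPB : ∀ k j, 0 ≤ PB k j)
    (hPAa : ∀ i, ∑ k, PA i k = a i) (hPBb : ∀ j, ∑ k, PB k j = b j)
    (hglue : ∀ k, ∑ i, PA i k = ∑ j, PB k j) :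
    sInf {v : ℝ | ∃ P : Matrix (Fin m) (Fin n) ℝ,
        (∀ i j, 0 ≤ P i j) ∧ (∀ i, ∑ j, P i j = a i) ∧ (∀ j, ∑ i, P i j = b j) ∧
        v = dotM (seqR CA CB) P}
      ≤ dotM CA PA + dotM CB PB := by
  refine csInf_le_of_le ⟨-∑ i, ∑ j, |seqR CA CB i j| * a i, ?_⟩
    ⟨glue PA PB, glue_nonneg hPA hPB, fun i => (sum_glue_row hPA hglue i).trans (hPAa i),
      fun j => (sum_glue_col hPB hglue j).trans (hPBb j), rfl⟩
    (dotM_seqR_glue_le CA CB hPA hPB hglue)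
  rintro _ ⟨P, hP, hPa, -, rfl⟩
  exact neg_sum_abs_mul_le_dotM (seqR CA CB) P hP hPa

theorem seq_plan_cost_ge_monolithic {m l n : ℕ} (hl : 0 < l)
    (CA : Matrix (Fin m) (Fin l) ℝ) (CB : Matrix (Fin l) (Fin n) ℝ)
    (a : Fin m → ℝ) (b : Fin n → ℝ)
    (ha : (∀ i, 0 ≤ a i) ∧ ∑ i, a i = 1) (hb : (∀ j, 0 ≤ b j) ∧ ∑ j, b j = 1)
    (PA : Matrix (Fin m) (Fin l) ℝ) (PB : Matrix (Fin l) (Fin n) ℝ)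
    (hPA : ∀ i k, 0 ≤ PA i k) (hPB : ∀ k j, 0 ≤ PB k j)
    (hPAa : ∀ i, ∑ k, PA i k = a i) (hPBb : ∀ j, ∑ k, PB k j = b j)
    (hglue : ∀ k, ∑ i, PA i k = ∑ j, PB k j) :
    sInf {v : ℝ | ∃ P : Matrix (Fin m) (Fin n) ℝ,
        (∀ i j, 0 ≤ P i j) ∧ (∀ i, ∑ j, P i j = a i) ∧ (∀ j, ∑ i, P i j = b j) ∧
        v = dotM (seqR CA CB) P}
      ≤ dotM CA PA + dotM CB PB :=
  seq_plan_cost_ge_monolithic_general CA CB a b PA PB hPA hPB hPAa hPBb hglue
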